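/- Median-of-means bound: Let G be a real random variable with mean μ and variance σ². Take ℓ independent empirical means Ḡ₁,…,Ḡ_ℓ, each over k i.i.d. samples of G, and let M = median(Ḡ₁,…,Ḡ_ℓ). Then for any ε > 0 with σ²/(kε²) < 1/2, Pr(|M - μ| > ε) ≤ exp(-2ℓ·(1/2 - σ²/(kε²))²). -/

import Mathlib

/-!
An empirical mean of `k` samples deviates from `m` by more than `ε` with probability at most
`p = σ²/(kε²)` (Chebyshev). If the median of `ℓ` such means deviates by more than `ε`, then at
least half of them do. The blocks of samples are independent, so the number of deviating means
is a sum of `ℓ` independent indicators of mean at most `p < 1/2`, and Hoeffding's inequality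
bounds the probability that it reaches `ℓ/2` by `exp (-2ℓ(1/2 - p)²)`.
-/

open MeasureTheory ProbabilityTheory Finset

/-- The upper median `x₍⌊l/2⌋₎` of the sorted tuple; the junk value `0` for the empty tuple. -/
noncomputable def tupleMedian {l : ℕ} (x : Fin l → ℝ) : ℝ :=
  ((List.ofFn x).mergeSort (· ≤ ·)).getD (l / 2) 0

namespace List

variable {α : Type*}

lemma SortedLE.succ_le_countP_le_getElem [Preorder α] [DecidableLE α] {L : List α}
    (hL : L.SortedLE) {n : ℕ} (hn : n < L.length) :
    n + 1 ≤ L.countP (· ≤ L[n]) := by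
  have hall : ∀ a ∈ L.take (n + 1), a ≤ L[n] := by
    intro a ha
    obtain ⟨i, hi, rfl⟩ := getElem_of_mem ha
    rw [getElem_take]
    exact hL.getElem_le_getElem_of_le (by simp at hi; omega)
  calc n + 1 = (L.take (n + 1)).countP (· ≤ L[n]) := by
        rw [countP_eq_length.mpr (by simpa using hall), length_take]; omega
    _ ≤ L.countP (· ≤ L[n]) := (take_sublist _ _).countP_le

lemma SortedLE.length_sub_le_countP_getElem_le [Preorder α] [DecidableLE α] {L : List α}
    (hL : L.SortedLE) {n : ℕ} (hn : n < L.length) :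
    L.length - n ≤ L.countP (L[n] ≤ ·) := by
  have hall : ∀ a ∈ L.drop n, L[n] ≤ a := by
    intro a ha
    obtain ⟨i, hi, rfl⟩ := getElem_of_mem ha
    rw [getElem_drop]
    exact hL.getElem_le_getElem_of_le (by omega)
  calc L.length - n = (L.drop n).countP (L[n] ≤ ·) := by
        rw [countP_eq_length.mpr (by simpa using hall), length_drop]
    _ ≤ L.countP (L[n] ≤ ·) := (drop_sublist _ _).countP_le

lemma countP_ofFn {l : ℕ} (x : Fin l → α) (p : α → Prop) [DecidablePred p] :
    (ofFn x).countP p = #{i | p (x i)} := by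
  rw [← Multiset.coe_countP, ← Fin.univ_val_map, Multiset.countP_map, card_def, filter_val]

end List

section tupleMedian

variable {l : ℕ} (x : Fin l → ℝ)

lemma tupleMedian_eq_getElem (hl : 0 < l) :
    tupleMedian x = ((List.ofFn x).mergeSort (· ≤ ·))[l / 2]'(by simp; omega) :=
  List.getD_eq_getElem _ _ _

lemma succ_half_le_card_le_tupleMedian (hl : 0 < l) :
    l / 2 + 1 ≤ #{i | x i ≤ tupleMedian x} := by
  have h := (List.sortedLE_mergeSort (l := List.ofFn x)).succ_le_countP_le_getElem
    (n := l / 2) (by simp; omega)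
  rwa [((List.ofFn x).mergeSort_perm _).countP_eq, List.countP_ofFn,
    ← tupleMedian_eq_getElem x hl] at h

lemma sub_half_le_card_tupleMedian_le (hl : 0 < l) :
    l - l / 2 ≤ #{i | tupleMedian x ≤ x i} := by
  have h := (List.sortedLE_mergeSort (l := List.ofFn x)).length_sub_le_countP_getElem_le
    (n := l / 2) (by simp; omega)
  rwa [((List.ofFn x).mergeSort_perm _).countP_eq, List.countP_ofFn,
    ← tupleMedian_eq_getElem x hl, List.length_mergeSort, List.length_ofFn] at h

lemma le_two_mul_card_of_lt_abs_tupleMedian_sub {m ε : ℝ} (h : ε < |tupleMedian x - m|) :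
    l ≤ 2 * #{i | ε < |x i - m|} := by
  rcases Nat.eq_zero_or_pos l with rfl | hl
  · exact Nat.zero_le _
  rcases lt_abs.mp h with hup | hdown
  · have hsub : #{i | tupleMedian x ≤ x i} ≤ #{i | ε < |x i - m|} :=
      card_le_card <| monotone_filter_right _ fun i _ hi => lt_abs.mpr (.inl (by linarith))
    have := sub_half_le_card_tupleMedian_le x hl
    omega
  · have hsub : #{i | x i ≤ tupleMedian x} ≤ #{i | ε < |x i - m|} :=
      card_le_card <| monotone_filter_right _ fun i _ hi => lt_abs.mpr (.inr (by linarith))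
    have := succ_half_le_card_le_tupleMedian x hl
    omega

end tupleMedian

section Probability

variable {Ω : Type*} [MeasurableSpace Ω] {P : Measure Ω}

lemma ProbabilityTheory.iIndepFun.curry {ι κ β : Type*} [MeasurableSpace β]
    {X : ι × κ → Ω → β} (hX : ∀ p, Measurable (X p)) (h : iIndepFun X P) :
    iIndepFun (fun i ω j => X (i, j) ω) P := by
  have := h.isProbabilityMeasure
  have := fun p => Measure.isProbabilityMeasure_map (μ := P) (hX p).aemeasurable
  rw [iIndepFun_iff_map_fun_eq_infinitePi_map fun i => measurable_pi_lambda _ fun j => hX _]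
  have hrow (i : ι) :
      P.map (fun ω j => X (i, j) ω) = Measure.infinitePi fun j => P.map (X (i, j)) :=
    (h.precomp (Prod.mk_right_injective i)).map_fun_eq_infinitePi_map fun j => hX _
  simp_rw [hrow]
  rw [← Measure.infinitePi_map_curry (fun i j => P.map (X (i, j))),
    ← h.map_fun_eq_infinitePi_map hX, Measure.map_map (by fun_prop) (measurable_pi_lambda _ hX)]
  rfl

lemma ProbabilityTheory.iIndepFun.iIndepSet_preimage {ι β : Type*} [MeasurableSpace β]
    {X : ι → Ω → β} (hX : ∀ i, Measurable (X i)) (h : iIndepFun X P) {S : ι → Set β}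
    (hS : ∀ i, MeasurableSet (S i)) :
    iIndepSet (fun i => X i ⁻¹' S i) P :=
  (iIndepSet_iff_meas_biInter fun i => hX i (hS i)).2 fun _ =>
    h.meas_biInter fun i _ => ⟨S i, hS i, rfl⟩

section SampleMean

variable {ι : Type*} [Fintype ι] {Y : ι → Ω → ℝ} {m σ2 : ℝ}

lemma integral_sampleMean [IsFiniteMeasure P] [Nonempty ι] (hY : ∀ j, Integrable (Y j) P)
    (hmean : ∀ j, P[Y j] = m) :
    P[fun ω => (∑ j, Y j ω) / Fintype.card ι] = m := by
  rw [integral_div, integral_finsetSum _ fun j _ => hY j]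
  simp [hmean]

lemma variance_sampleMean (hY : ∀ j, MemLp (Y j) 2 P)
    (hindep : Pairwise fun a b => IndepFun (Y a) (Y b) P) (hvar : ∀ j, variance (Y j) P = σ2) :
    variance (fun ω => (∑ j, Y j ω) / Fintype.card ι) P = σ2 / Fintype.card ι := by
  have hfun : (fun ω => (∑ j, Y j ω) / Fintype.card ι) =
      fun ω => (Fintype.card ι : ℝ)⁻¹ * (∑ j, Y j) ω := by
    ext ω; simp [div_eq_inv_mul]
  rw [hfun, variance_const_mul,
    IndepFun.variance_sum (fun j _ => hY j) fun a _ b _ hab => hindep hab]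
  rcases eq_or_ne (Fintype.card ι : ℝ) 0 with h | h
  · simp [h]
  · simp [hvar]
    field_simp

lemma measureReal_lt_abs_sampleMean_sub_le [IsProbabilityMeasure P] [Nonempty ι]
    (hY : ∀ j, MemLp (Y j) 2 P) (hindep : Pairwise fun a b => IndepFun (Y a) (Y b) P)
    (hmean : ∀ j, P[Y j] = m) (hvar : ∀ j, variance (Y j) P = σ2) {ε : ℝ} (hε : 0 < ε) :
    P.real {ω | ε < |(∑ j, Y j ω) / Fintype.card ι - m|} ≤ σ2 / (Fintype.card ι * ε ^ 2) := by
  set X : Ω → ℝ := fun ω => (∑ j, Y j ω) / Fintype.card ι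
  have hX : MemLp X 2 P := by
    simpa [X, div_eq_mul_inv] using
      (memLp_finsetSum univ fun j _ => hY j).mul_const (Fintype.card ι : ℝ)⁻¹
  have hsub : {ω | ε < |X ω - m|} ⊆ {ω | ε ≤ |X ω - P[X]|} := by
    rw [integral_sampleMean (fun j => (hY j).integrable one_le_two) hmean]
    exact fun ω (h : ε < |X ω - m|) => h.le
  calc P.real {ω | ε < |X ω - m|} ≤ P.real {ω | ε ≤ |X ω - P[X]|} := measureReal_mono hsub
    _ ≤ variance X P / ε ^ 2 :=
      ENNReal.toReal_le_of_le_ofReal (div_nonneg (variance_nonneg _ _) (sq_nonneg _))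
        (meas_ge_le_variance_div_sq hX hε)
    _ = σ2 / (Fintype.card ι * ε ^ 2) := by rw [variance_sampleMean hY hindep hvar, div_div]

end SampleMean

lemma measureReal_card_le_two_mul_card_mem_le [IsProbabilityMeasure P] {ι : Type*} [Fintype ι]
    {A : ι → Set Ω} [∀ i, DecidablePred (· ∈ A i)] (hA : ∀ i, MeasurableSet (A i))
    (hind : iIndepSet A P) {p : ℝ} (hp : ∀ i, P.real (A i) ≤ p) (hp_half : p ≤ 1 / 2) :
    P.real {ω | Fintype.card ι ≤ 2 * #{i | ω ∈ A i}} ≤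
      Real.exp (-2 * Fintype.card ι * (1 / 2 - p) ^ 2) := by
  set n : ℝ := (Fintype.card ι : ℝ) with hn
  let Y : ι → Ω → ℝ := fun i => (A i).indicator 1
  have hY_meas (i : ι) : Measurable (Y i) := measurable_one.indicator (hA i)
  have hY_mean (i : ι) : P[Y i] = P.real (A i) := integral_indicator_one (hA i)
  -- Hoeffding's lemma for values in `[0, 1]`.
  have hsubG (i : ι) :
      HasSubgaussianMGF (fun ω => Y i ω - P[Y i]) ((‖(1 : ℝ) - 0‖₊ / 2) ^ 2) P :=
    hasSubgaussianMGF_of_mem_Icc (hY_meas i).aemeasurable <| ae_of_all _ fun ω => by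
      by_cases h : ω ∈ A i <;> simp [Y, h]
  have hindY : iIndepFun (fun i ω => Y i ω - P[Y i]) P :=
    hind.iIndepFun_indicator.comp _ fun i => measurable_id.sub_const _
  have hsub : {ω | Fintype.card ι ≤ 2 * #{i | ω ∈ A i}} ⊆
      {ω | n * (1 / 2 - p) ≤ ∑ i, (Y i ω - P[Y i])} := by
    intro ω hω
    have hN : n ≤ 2 * (#{i | ω ∈ A i} : ℝ) := by
      rw [hn]; exact_mod_cast (hω : Fintype.card ι ≤ _)
    have hcount : ∑ i, Y i ω = #{i | ω ∈ A i} := by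
      simp only [Y, Set.indicator_apply, Pi.one_apply, sum_boole]
    have hmean : ∑ i, P[Y i] ≤ n * p := by
      simpa [hY_mean, n] using sum_le_sum fun i (_ : i ∈ univ) => hp i
    simp only [Set.mem_ofPred_eq, sum_sub_distrib, hcount]
    linarith
  have hδ : 0 ≤ n * (1 / 2 - p) := mul_nonneg (by positivity) (by linarith)
  calc P.real {ω | Fintype.card ι ≤ 2 * #{i | ω ∈ A i}}
      ≤ P.real {ω | n * (1 / 2 - p) ≤ ∑ i, (Y i ω - P[Y i])} := measureReal_mono hsub
    _ ≤ _ := HasSubgaussianMGF.measure_sum_ge_le_of_iIndepFun hindY (fun i _ => hsubG i) hδ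
    _ = Real.exp (-2 * n * (1 / 2 - p) ^ 2) := by
      congr 1
      simp only [sub_zero, nnnorm_one, sum_const, card_univ, nsmul_eq_mul, NNReal.coe_mul,
        NNReal.coe_natCast, NNReal.coe_pow, NNReal.coe_div, NNReal.coe_one, NNReal.coe_ofNat,
        ← hn]
      rcases eq_or_ne n 0 with h | h
      · simp [h]
      · field_simp

end Probability

theorem stmt_13_general {Ω : Type*} [MeasurableSpace Ω] (P : Measure Ω) [IsProbabilityMeasure P]
    (ℓ k : ℕ) (hk : 0 < k) (G : Fin ℓ × Fin k → Ω → ℝ) (m σ2 : ℝ)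
    (hmeas : ∀ p, Measurable (G p)) (hindep : iIndepFun G P)
    (hL2 : ∀ p, MemLp (G p) 2 P)
    (hmean : ∀ p, P[G p] = m) (hvar : ∀ p, variance (G p) P = σ2)
    (ε : ℝ) (hε : 0 < ε) (hcheb : σ2 / (k * ε ^ 2) < 1 / 2) :
    P {ω | ε < |tupleMedian (fun i => (∑ j, G (i, j) ω) / k) - m|} ≤
      ENNReal.ofReal (Real.exp (-2 * ℓ * (1 / 2 - σ2 / (k * ε ^ 2)) ^ 2)) := by
  have : Nonempty (Fin k) := Fin.pos_iff_nonempty.mp hk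
  set B : Fin ℓ → Ω → ℝ := fun i ω => (∑ j, G (i, j) ω) / k
  set A : Fin ℓ → Set Ω := fun i => {ω | ε < |B i ω - m|}
  have hB_meas (i : Fin ℓ) : Measurable (B i) := by fun_prop
  have hdev_meas : MeasurableSet {x : ℝ | ε < |x - m|} :=
    measurableSet_lt measurable_const (by fun_prop)
  have hA_meas (i : Fin ℓ) : MeasurableSet (A i) := hB_meas i hdev_meas
  have hA_indep : iIndepSet A P :=
    ((hindep.curry hmeas).comp (fun _ v => (∑ j, v j) / k) fun _ => by fun_prop)
      |>.iIndepSet_preimage hB_meas fun _ => hdev_meas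
  have hA_le (i : Fin ℓ) : P.real (A i) ≤ σ2 / (k * ε ^ 2) := by
    simpa using measureReal_lt_abs_sampleMean_sub_le (fun j => hL2 (i, j))
      (fun a b hab => hindep.indepFun (by simpa using hab)) (fun j => hmean (i, j))
      (fun j => hvar (i, j)) hε
  calc P {ω | ε < |tupleMedian (fun i => B i ω) - m|}
      ≤ P {ω | Fintype.card (Fin ℓ) ≤ 2 * #{i | ω ∈ A i}} := measure_mono fun ω hω => by
        rw [Set.mem_ofPred_eq, Fintype.card_fin]
        convert le_two_mul_card_of_lt_abs_tupleMedian_sub _ hω using 4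
        exact Iff.rfl
    _ = ENNReal.ofReal (P.real {ω | Fintype.card (Fin ℓ) ≤ 2 * #{i | ω ∈ A i}}) :=
        (ofReal_measureReal (measure_ne_top P _)).symm
    _ ≤ _ := ENNReal.ofReal_le_ofReal <| by
        simpa using measureReal_card_le_two_mul_card_mem_le hA_meas hA_indep hA_le hcheb.le

/-- Median-of-means bound: take ℓ independent empirical means, each over k i.i.d.
samples of a random variable with mean m and variance σ²; if σ²/(kε²) < 1/2, the
median M of the empirical means satisfies
Pr(|M - m| > ε) ≤ exp(-2ℓ(1/2 - σ²/(kε²))²). -/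
theorem stmt_13 {Ω : Type*} [MeasurableSpace Ω] (P : Measure Ω) [IsProbabilityMeasure P]
    (ℓ k : ℕ) (hℓ : 0 < ℓ) (hk : 0 < k) (G : Fin ℓ × Fin k → Ω → ℝ) (m σ2 : ℝ)
    (hmeas : ∀ p, Measurable (G p)) (hindep : iIndepFun G P)
    (hL2 : ∀ p, MemLp (G p) 2 P)
    (hmean : ∀ p, P[G p] = m) (hvar : ∀ p, variance (G p) P = σ2)
    (ε : ℝ) (hε : 0 < ε) (hcheb : σ2 / (k * ε ^ 2) < 1 / 2) :
    P {ω | ε < |tupleMedian (fun i => (∑ j, G (i, j) ω) / k) - m|} ≤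
      ENNReal.ofReal (Real.exp (-2 * ℓ * (1 / 2 - σ2 / (k * ε ^ 2)) ^ 2)) :=
  stmt_13_general P ℓ k hk G m σ2 hmeas hindep hL2 hmean hvar ε hε hcheb
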